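/- The iterated conditional (B|A)|(B|A) is constant and equal to 1 (validating Boethius' Thesis in Approach 2): let μ be a probability measure on a measurable space Ω, A, B measurable with μ(A) > 0, x = P(B|A) with x ≠ 0, and f = 1_{A∩B} + x·1_{Aᶜ}. If a real number m satisfies ∫ (f + m·(1 − f)) dμ = m, then m = 1, and in that case the random quantity f + m·(1 − f) is identically equal to 1 on Ω. -/

import Mathlib

/-
Integrating `f = 1_{A∩B} + x·1_{Aᶜ}` gives `P(A∩B) + x (1 - P(A)) = x`, since `P(A∩B) = x P(A)`.
Hence `∫ (f + m (1 - f)) dμ = x + m (1 - x)`, and the equation `x + m (1 - x) = m`, i.e.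
`x (1 - m) = 0`, forces `m = 1` as soon as `x ≠ 0`; then `f + 1·(1 - f) = 1` pointwise.
-/

open MeasureTheory

/-- Conditional probability `P(E|H) = μ(E ∩ H) / μ(H)` as a real number. -/
noncomputable def condP {Ω : Type*} [MeasurableSpace Ω] (μ : Measure Ω) (E H : Set Ω) : ℝ :=
  (μ (E ∩ H)).toReal / (μ H).toReal

section ConditionalEvent

variable {Ω : Type*} [MeasurableSpace Ω] (μ : Measure Ω)

-- If `μ H = 0` the division in `condP` returns `0`, but then `μ (E ∩ H) = 0` as well.
theorem condP_mul_measureReal [IsFiniteMeasure μ] (E H : Set Ω) :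
    condP μ E H * μ.real H = μ.real (E ∩ H) := by
  by_cases hH : μ.real H = 0
  · have hEH : μ.real (E ∩ H) ≤ μ.real H := measureReal_mono Set.inter_subset_right
    rw [hH, mul_zero]
    linarith [measureReal_nonneg (μ := μ) (s := E ∩ H)]
  · exact div_mul_cancel₀ _ hH

noncomputable def condEventIndicator (A B : Set Ω) (ω : Ω) : ℝ :=
  (A ∩ B).indicator 1 ω + condP μ B A * Aᶜ.indicator 1 ω

variable [IsProbabilityMeasure μ] {A B : Set Ω}

theorem integrable_condEventIndicator (hA : MeasurableSet A) (hB : MeasurableSet B) :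
    Integrable (condEventIndicator μ A B) μ :=
  ((integrable_const 1).indicator (hA.inter hB)).add
    (((integrable_const 1).indicator hA.compl).const_mul _)

theorem integral_condEventIndicator (hA : MeasurableSet A) (hB : MeasurableSet B) :
    ∫ ω, condEventIndicator μ A B ω ∂μ = condP μ B A := by
  have hAB : μ.real (A ∩ B) = condP μ B A * μ.real A := by
    rw [condP_mul_measureReal, Set.inter_comm]
  unfold condEventIndicator
  rw [integral_add ((integrable_const 1).indicator (hA.inter hB))
      (((integrable_const 1).indicator hA.compl).const_mul _),
    integral_const_mul, integral_indicator_one (hA.inter hB), integral_indicator_one hA.compl,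
    probReal_compl_eq_one_sub hA, hAB]
  ring

end ConditionalEvent

theorem integral_add_mul_one_sub {Ω : Type*} [MeasurableSpace Ω] {μ : Measure Ω}
    [IsProbabilityMeasure μ] {f : Ω → ℝ} (hf : Integrable f μ) (m : ℝ) :
    ∫ ω, (f ω + m * (1 - f ω)) ∂μ = ∫ ω, f ω ∂μ + m * (1 - ∫ ω, f ω ∂μ) := by
  have hg : Integrable (fun ω => m * (1 - f ω)) μ := ((integrable_const 1).sub hf).const_mul m
  rw [integral_add hf hg, integral_const_mul,
    integral_sub (integrable_const 1) hf, integral_const, probReal_univ, one_smul]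

theorem eq_one_of_add_mul_one_sub_eq {x m : ℝ} (hx : x ≠ 0) (h : x + m * (1 - x) = m) :
    m = 1 := by
  have hxm : x * (1 - m) = 0 := by linarith
  linarith [(mul_eq_zero.mp hxm).resolve_left hx]

theorem iterated_conditional_B_given_A_given_itself_eq_one_general
    {Ω : Type*} [MeasurableSpace Ω] (μ : Measure Ω) [IsProbabilityMeasure μ]
    (A B : Set Ω) (hA : MeasurableSet A) (hB : MeasurableSet B)
    (x : ℝ) (hx : x = condP μ B A) (hx0 : x ≠ 0)
    (f : Ω → ℝ)
    (hf : f = fun ω => (A ∩ B).indicator (1 : Ω → ℝ) ω + x * Aᶜ.indicator (1 : Ω → ℝ) ω)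
    (m : ℝ) (hm : (∫ ω, (f ω + m * (1 - f ω)) ∂μ) = m) :
    m = 1 ∧ ∀ ω : Ω, f ω + m * (1 - f ω) = 1 := by
  have hf' : f = condEventIndicator μ A B := by rw [hf, hx]; rfl
  rw [hf', integral_add_mul_one_sub (integrable_condEventIndicator μ hA hB),
    integral_condEventIndicator μ hA hB, ← hx] at hm
  have hm1 : m = 1 := eq_one_of_add_mul_one_sub_eq hx0 hm
  exact ⟨hm1, fun ω => by rw [hm1]; ring⟩

/-- The iterated conditional `(B|A)|(B|A)` is constant and equal to `1` (validating
Boethius' Thesis in Approach 2): with `x = P(B|A) ≠ 0` and `f = 1_{A∩B} + x·1_{Aᶜ}`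
the indicator of `B|A`, if a real number `m` satisfies `∫ (f + m·(1 − f)) dμ = m`,
then `m = 1` and the random quantity `f + m·(1 − f)` is identically `1` on `Ω`. -/
theorem iterated_conditional_B_given_A_given_itself_eq_one
    {Ω : Type*} [MeasurableSpace Ω] (μ : Measure Ω) [IsProbabilityMeasure μ]
    (A B : Set Ω) (hA : MeasurableSet A) (hB : MeasurableSet B) (hApos : 0 < μ A)
    (x : ℝ) (hx : x = condP μ B A) (hx0 : x ≠ 0)
    (f : Ω → ℝ)
    (hf : f = fun ω => (A ∩ B).indicator (1 : Ω → ℝ) ω + x * Aᶜ.indicator (1 : Ω → ℝ) ω)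
    (m : ℝ) (hm : (∫ ω, (f ω + m * (1 - f ω)) ∂μ) = m) :
    m = 1 ∧ ∀ ω : Ω, f ω + m * (1 - f ω) = 1 :=
  iterated_conditional_B_given_A_given_itself_eq_one_general μ A B hA hB x hx hx0 f hf m hm
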